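/- arXiv:1909.06991 — 4 statements merged into one kernel-verified Lean document; each statement's English description precedes it below -/
import Mathlib

section
/- Let n ≥ 2 and let Ω ⊂ ℝⁿ be a bounded open set with diameter D₀. Let s > 1, 0 < t ≤ ∞, 0 < κ ≤ n, and let f : ℝⁿ → [0, ∞) be measurable, vanishing outside Ω, with ‖f‖_{L^{s,t;κ}(Ω)} < ∞. Then there exists a constant C = C(n, s, κ) > 0 such that sup_{y ∈ Ω} M_{κ/s}^{D₀} f(y) ≤ C ‖f‖_{L^{s,t;κ}(Ω)}. -/
/-!
Fix `y ∈ Ω`, `0 < ρ < D₀`, `B = B_ρ(y)` and `E = Ω ∩ B`. Since `d_f` is antitone,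
`λ^τ d_f(λ)^{τ/s} ≤ τ ∫₀^λ μ^{τ-1} d_f(μ)^{τ/s} dμ`, so
`‖f‖_{L^{s,∞}(E)} ≤ (τ/s)^{1/τ} ‖f‖_{L^{s,τ}(E)}`, and `(τ/s)^{1/τ} ≤ e^{1/s}` uniformly in `τ`.
Splitting the layer-cake integral of `f` over `E` at the level where the bounds `d_f ≤ |E|` and
`d_f(λ) ≤ ‖f‖^s_{L^{s,∞}(E)} λ^{-s}` meet gives `∫_E f ≤ s/(s-1) ‖f‖_{L^{s,∞}(E)} |E|^{1-1/s}`.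
As `|B| = |B_1| ρ^n`, the quantity `ρ^{κ/s} |B|⁻¹ ∫_B f` is then at most
`C ρ^{(κ-n)/s} ‖f‖_{L^{s,t}(E)}`, a term of the supremum defining the Lorentz–Morrey norm.
-/

open MeasureTheory Metric Set ENNReal

noncomputable section

/-- Distribution function over a set `Ω` of an `ℝ≥0∞`-valued function. -/
def distFn {n : ℕ} (Ω : Set (EuclideanSpace ℝ (Fin n)))
    (g : EuclideanSpace ℝ (Fin n) → ℝ≥0∞) (lam : ℝ) : ℝ≥0∞ :=
  volume {x ∈ Ω | ENNReal.ofReal lam < g x}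

/-- Lorentz quasinorm `‖g‖_{L^{s,t}(Ω)}` for finite `t`. -/
def lorentzNorm {n : ℕ} (Ω : Set (EuclideanSpace ℝ (Fin n)))
    (g : EuclideanSpace ℝ (Fin n) → ℝ≥0∞) (s t : ℝ) : ℝ≥0∞ :=
  (ENNReal.ofReal s *
    ∫⁻ lam in Set.Ioi (0 : ℝ),
      ENNReal.ofReal (lam ^ (t - 1)) * (distFn Ω g lam) ^ (t / s)) ^ (1 / t)

/-- Marcinkiewicz (weak-`L^s`) quasinorm `‖g‖_{L^{s,∞}(Ω)}`. -/
def weakNorm {n : ℕ} (Ω : Set (EuclideanSpace ℝ (Fin n)))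
    (g : EuclideanSpace ℝ (Fin n) → ℝ≥0∞) (s : ℝ) : ℝ≥0∞ :=
  ⨆ lam ∈ Set.Ioi (0 : ℝ), ENNReal.ofReal lam * (distFn Ω g lam) ^ (1 / s)

/-- Lorentz quasinorm with second exponent `t ∈ (0, ∞]`. -/
def lorentzNormT {n : ℕ} (Ω : Set (EuclideanSpace ℝ (Fin n)))
    (g : EuclideanSpace ℝ (Fin n) → ℝ≥0∞) (s : ℝ) (t : ℝ≥0∞) : ℝ≥0∞ :=
  if t = ∞ then weakNorm Ω g s else lorentzNorm Ω g s t.toReal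

/-- Lorentz–Morrey quasinorm `‖g‖_{L^{s,t;κ}(Ω)}`, with `D₀ = diam Ω`. -/
def lorentzMorrey (n : ℕ) (Ω : Set (EuclideanSpace ℝ (Fin n)))
    (g : EuclideanSpace ℝ (Fin n) → ℝ≥0∞) (s : ℝ) (t : ℝ≥0∞) (κ : ℝ) : ℝ≥0∞ :=
  ⨆ x ∈ Ω, ⨆ ϱ ∈ Set.Ioo (0 : ℝ) (Metric.diam Ω),
    ENNReal.ofReal (ϱ ^ ((κ - (n : ℝ)) / s)) * lorentzNormT (Ω ∩ ball x ϱ) g s t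

/-- Cut-off fractional maximal function `M_α^r g` (supremum over radii `0 < ρ < r`). -/
def fracMaxCut {n : ℕ} (α r : ℝ) (g : EuclideanSpace ℝ (Fin n) → ℝ≥0∞)
    (x : EuclideanSpace ℝ (Fin n)) : ℝ≥0∞ :=
  ⨆ ρ ∈ Set.Ioo (0 : ℝ) r,
    ENNReal.ofReal (ρ ^ α) * ((volume (ball x ρ))⁻¹ * ∫⁻ y in ball x ρ, g y)

lemma Real.div_rpow_inv_le_exp {τ s : ℝ} (hτ : 0 < τ) (hs : 0 < s) :
    (τ / s) ^ τ⁻¹ ≤ Real.exp s⁻¹ := by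
  rw [Real.rpow_def_of_pos (by positivity), Real.exp_le_exp]
  calc Real.log (τ / s) * τ⁻¹ ≤ τ / s * τ⁻¹ := by
        gcongr
        exact (Real.log_le_sub_one_of_pos (by positivity)).trans (sub_le_self _ zero_le_one)
    _ = s⁻¹ := by field_simp

lemma Real.mul_add_rpow_mul_div_eq {s v w : ℝ} (hs : 1 < s) (hv : 0 < v) (hw : 0 < w) :
    v * (w * v ^ (-s⁻¹)) + w ^ s * ((w * v ^ (-s⁻¹)) ^ (1 - s) / (s - 1)) =
      s / (s - 1) * w * v ^ (1 - s⁻¹) := by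
  have hs0 : s ≠ 0 := by positivity
  have hs1 : s - 1 ≠ 0 := by linarith
  have h1 : v * v ^ (-s⁻¹) = v ^ (1 - s⁻¹) := by
    rw [sub_eq_add_neg, Real.rpow_add hv, Real.rpow_one]
  have h2 : w ^ s * (w * v ^ (-s⁻¹)) ^ (1 - s) = w * v ^ (1 - s⁻¹) := by
    rw [Real.mul_rpow hw.le (by positivity), ← Real.rpow_mul hv.le, ← mul_assoc,
      ← Real.rpow_add hw, add_sub_cancel, Real.rpow_one]
    congr 2
    field_simp
    ring
  calc v * (w * v ^ (-s⁻¹)) + w ^ s * ((w * v ^ (-s⁻¹)) ^ (1 - s) / (s - 1))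
      = w * (v * v ^ (-s⁻¹)) + w ^ s * (w * v ^ (-s⁻¹)) ^ (1 - s) / (s - 1) := by ring
    _ = s / (s - 1) * w * v ^ (1 - s⁻¹) := by
        rw [h1, h2]
        field_simp
        ring

lemma ENNReal.inv_mul_rpow_one_sub {x : ℝ≥0∞} (hx0 : x ≠ 0) (hx : x ≠ ∞) (r : ℝ) :
    x⁻¹ * x ^ (1 - r) = x ^ (-r) := by
  rw [← ENNReal.rpow_neg_one, ← ENNReal.rpow_add _ _ hx0 hx]
  ring_nf

lemma lintegral_Ioc_rpow_sub_one {τ lam : ℝ} (hτ : 0 < τ) (hlam : 0 ≤ lam) :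
    ∫⁻ μ in Ioc 0 lam, ENNReal.ofReal (μ ^ (τ - 1)) = ENNReal.ofReal (lam ^ τ / τ) := by
  rw [← ofReal_integral_eq_lintegral_ofReal
    (intervalIntegral.intervalIntegrable_rpow' (by linarith)).1
    ((ae_restrict_iff' measurableSet_Ioc).2 (ae_of_all _ fun μ hμ => Real.rpow_nonneg hμ.1.le _)),
    ← intervalIntegral.integral_of_le hlam, integral_rpow (Or.inl (by linarith)),
    sub_add_cancel, Real.zero_rpow hτ.ne', sub_zero]

lemma lintegral_Ioi_rpow_neg {s a : ℝ} (hs : 1 < s) (ha : 0 < a) :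
    ∫⁻ lam in Ioi a, ENNReal.ofReal (lam ^ (-s)) = ENNReal.ofReal (a ^ (1 - s) / (s - 1)) := by
  rw [← ofReal_integral_eq_lintegral_ofReal (integrableOn_Ioi_rpow_of_lt (by linarith) ha)
    ((ae_restrict_iff' measurableSet_Ioi).2
      (ae_of_all _ fun lam (hlam : a < lam) => Real.rpow_nonneg (ha.trans hlam).le _)),
    integral_Ioi_rpow_of_lt (by linarith) ha, neg_add_eq_sub, ← neg_sub s 1, div_neg, neg_div,
    neg_neg]

lemma setLIntegral_eq_setLIntegral_inter_of_eq_zero {α : Type*} [MeasurableSpace α]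
    {μ : Measure α} {Ω B : Set α} (hΩ : MeasurableSet Ω) {g : α → ℝ≥0∞}
    (hg : ∀ x ∉ Ω, g x = 0) :
    ∫⁻ z in B, g z ∂μ = ∫⁻ z in Ω ∩ B, g z ∂μ := by
  rw [← Measure.restrict_restrict hΩ, ← lintegral_indicator hΩ,
    indicator_eq_self.2 fun x hx => by_contra fun hxΩ => hx (hg x hxΩ)]

namespace LorentzMorrey

variable {n : ℕ}

section WeakNorm

variable {E : Set (EuclideanSpace ℝ (Fin n))} {g : EuclideanSpace ℝ (Fin n) → ℝ≥0∞}

lemma distFn_antitone : Antitone (distFn E g) := fun _ _ hab =>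
  measure_mono fun _ hx => ⟨hx.1, (ENNReal.ofReal_le_ofReal hab).trans_lt hx.2⟩

lemma distFn_le_volume (lam : ℝ) : distFn E g lam ≤ volume E :=
  measure_mono (sep_subset _ _)

lemma ofReal_mul_distFn_rpow_le_weakNorm (s : ℝ) {lam : ℝ} (hlam : 0 < lam) :
    ENNReal.ofReal lam * distFn E g lam ^ (1 / s) ≤ weakNorm E g s :=
  le_iSup₂ (f := fun lam (_ : lam ∈ Ioi (0 : ℝ)) =>
    ENNReal.ofReal lam * distFn E g lam ^ (1 / s)) lam hlam

lemma distFn_le_weakNorm_rpow_mul {s lam : ℝ} (hs : 0 < s) (hlam : 0 < lam) :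
    distFn E g lam ≤ weakNorm E g s ^ s * ENNReal.ofReal (lam ^ (-s)) := by
  have h := ENNReal.rpow_le_rpow (ofReal_mul_distFn_rpow_le_weakNorm s hlam (E := E) (g := g))
    hs.le
  rw [ENNReal.mul_rpow_of_nonneg _ _ hs.le, ← ENNReal.rpow_mul, one_div_mul_cancel hs.ne',
    ENNReal.rpow_one, ENNReal.ofReal_rpow_of_pos hlam] at h
  calc distFn E g lam
      = ENNReal.ofReal (lam ^ s) * distFn E g lam * ENNReal.ofReal (lam ^ (-s)) := by
        rw [mul_comm _ (distFn E g lam), mul_assoc, ← ENNReal.ofReal_mul (by positivity),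
          ← Real.rpow_add hlam, add_neg_cancel, Real.rpow_zero, ENNReal.ofReal_one, mul_one]
    _ ≤ weakNorm E g s ^ s * ENNReal.ofReal (lam ^ (-s)) := by gcongr

lemma ofReal_rpow_div_mul_distFn_rpow_le_lintegral {s τ lam : ℝ} (hs : 0 ≤ s) (hτ : 0 < τ)
    (hlam : 0 < lam) :
    ENNReal.ofReal (lam ^ τ / τ) * distFn E g lam ^ (τ / s) ≤
      ∫⁻ μ in Ioi 0, ENNReal.ofReal (μ ^ (τ - 1)) * distFn E g μ ^ (τ / s) :=
  calc ENNReal.ofReal (lam ^ τ / τ) * distFn E g lam ^ (τ / s)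
      = ∫⁻ μ in Ioc 0 lam, ENNReal.ofReal (μ ^ (τ - 1)) * distFn E g lam ^ (τ / s) := by
        rw [lintegral_mul_const _ (by fun_prop), lintegral_Ioc_rpow_sub_one hτ hlam.le]
    _ ≤ ∫⁻ μ in Ioc 0 lam, ENNReal.ofReal (μ ^ (τ - 1)) * distFn E g μ ^ (τ / s) :=
        setLIntegral_mono' measurableSet_Ioc fun μ hμ => by
          gcongr
          exact distFn_antitone hμ.2
    _ ≤ _ := lintegral_mono_set Ioc_subset_Ioi_self

lemma weakNorm_le_lorentzNorm {s τ : ℝ} (hs : 0 < s) (hτ : 0 < τ) :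
    weakNorm E g s ≤ ENNReal.ofReal (Real.exp s⁻¹) * lorentzNorm E g s τ := by
  refine iSup₂_le fun lam (hlam : 0 < lam) => ?_
  set I := ∫⁻ μ in Ioi 0, ENNReal.ofReal (μ ^ (τ - 1)) * distFn E g μ ^ (τ / s)
  have hpow : (ENNReal.ofReal lam * distFn E g lam ^ (1 / s)) ^ τ
      ≤ ENNReal.ofReal (τ / s) * (ENNReal.ofReal s * I) :=
    calc (ENNReal.ofReal lam * distFn E g lam ^ (1 / s)) ^ τ
        = ENNReal.ofReal τ * (ENNReal.ofReal (lam ^ τ / τ) * distFn E g lam ^ (τ / s)) := by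
          rw [ENNReal.mul_rpow_of_nonneg _ _ hτ.le, ENNReal.ofReal_rpow_of_pos hlam,
            ← ENNReal.rpow_mul, ← mul_assoc, ← ENNReal.ofReal_mul hτ.le,
            mul_div_cancel₀ _ hτ.ne', one_div_mul_eq_div]
      _ ≤ ENNReal.ofReal τ * I := by
          gcongr
          exact ofReal_rpow_div_mul_distFn_rpow_le_lintegral hs.le hτ hlam
      _ = ENNReal.ofReal (τ / s) * (ENNReal.ofReal s * I) := by
          rw [← mul_assoc, ← ENNReal.ofReal_mul (by positivity), div_mul_cancel₀ _ hs.ne']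
  calc ENNReal.ofReal lam * distFn E g lam ^ (1 / s)
      ≤ (ENNReal.ofReal (τ / s) * (ENNReal.ofReal s * I)) ^ τ⁻¹ :=
        (ENNReal.le_rpow_inv_iff hτ).2 hpow
    _ = ENNReal.ofReal ((τ / s) ^ τ⁻¹) * lorentzNorm E g s τ := by
        rw [ENNReal.mul_rpow_of_nonneg _ _ (by positivity),
          ENNReal.ofReal_rpow_of_pos (by positivity), lorentzNorm, one_div]
    _ ≤ ENNReal.ofReal (Real.exp s⁻¹) * lorentzNorm E g s τ := by
        gcongr
        exact Real.div_rpow_inv_le_exp hτ hs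

lemma weakNorm_le_lorentzNormT {s : ℝ} {t : ℝ≥0∞} (hs : 0 < s) (ht : 0 < t) :
    weakNorm E g s ≤ ENNReal.ofReal (Real.exp s⁻¹) * lorentzNormT E g s t := by
  unfold lorentzNormT
  split_ifs with htop
  · exact le_mul_of_one_le_left zero_le (by simp [hs.le])
  · exact weakNorm_le_lorentzNorm hs (ENNReal.toReal_pos ht.ne' htop)

lemma lintegral_distFn_le {s a : ℝ} (hs : 1 < s) (ha : 0 < a) :
    ∫⁻ lam in Ioi 0, distFn E g lam ≤
      volume E * ENNReal.ofReal a + weakNorm E g s ^ s * ENNReal.ofReal (a ^ (1 - s) / (s - 1)) :=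
  calc ∫⁻ lam in Ioi 0, distFn E g lam
      = (∫⁻ lam in Ioc 0 a, distFn E g lam) + ∫⁻ lam in Ioi a, distFn E g lam := by
        rw [← lintegral_union measurableSet_Ioi (Ioc_disjoint_Ioi le_rfl),
          Ioc_union_Ioi_eq_Ioi ha.le]
    _ ≤ (∫⁻ _ in Ioc 0 a, volume E) +
          ∫⁻ lam in Ioi a, weakNorm E g s ^ s * ENNReal.ofReal (lam ^ (-s)) :=
        add_le_add (lintegral_mono distFn_le_volume) <|
          setLIntegral_mono' measurableSet_Ioi fun lam (hlam : a < lam) =>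
            distFn_le_weakNorm_rpow_mul (by linarith) (ha.trans hlam)
    _ = _ := by
        rw [setLIntegral_const, Real.volume_Ioc, sub_zero,
          lintegral_const_mul _ (by fun_prop), lintegral_Ioi_rpow_neg hs ha]

end WeakNorm

section SetIntegral

variable {E : Set (EuclideanSpace ℝ (Fin n))} {f : EuclideanSpace ℝ (Fin n) → ℝ}

lemma setLIntegral_ofReal_eq_lintegral_distFn (hf : Measurable f) (hf0 : ∀ x, 0 ≤ f x) :
    ∫⁻ x in E, ENNReal.ofReal (f x) =
      ∫⁻ lam in Ioi 0, distFn E (fun z => ENNReal.ofReal (f z)) lam := by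
  rw [lintegral_eq_lintegral_meas_lt _ (ae_of_all _ hf0) hf.aemeasurable]
  refine setLIntegral_congr_fun measurableSet_Ioi fun lam (hlam : 0 < lam) => ?_
  rw [Measure.restrict_apply (measurableSet_lt measurable_const hf), distFn, inter_comm]
  simp only [ENNReal.ofReal_lt_ofReal_iff_of_nonneg hlam.le]
  rfl

lemma setLIntegral_ofReal_le_weakNorm_mul {s : ℝ} (hs : 1 < s) (hE : volume E ≠ ∞)
    (hf : Measurable f) (hf0 : ∀ x, 0 ≤ f x) :
    ∫⁻ x in E, ENNReal.ofReal (f x) ≤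
      ENNReal.ofReal (s / (s - 1)) * weakNorm E (fun z => ENNReal.ofReal (f z)) s *
        volume E ^ (1 - s⁻¹) := by
  set g : EuclideanSpace ℝ (Fin n) → ℝ≥0∞ := fun z => ENNReal.ofReal (f z)
  have hs0 : 0 < s := by linarith
  have hs1 : 0 < s - 1 := by linarith
  rw [setLIntegral_ofReal_eq_lintegral_distFn hf hf0]
  by_cases hE0 : volume E = 0
  · calc ∫⁻ lam in Ioi 0, distFn E g lam ≤ ∫⁻ _ in Ioi (0 : ℝ), 0 :=
          lintegral_mono fun lam => (distFn_le_volume lam).trans_eq hE0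
      _ ≤ _ := by rw [lintegral_zero]; exact zero_le
  by_cases hW0 : weakNorm E g s = 0
  · calc ∫⁻ lam in Ioi 0, distFn E g lam ≤ ∫⁻ _ in Ioi (0 : ℝ), 0 :=
          setLIntegral_mono' measurableSet_Ioi fun lam (hlam : 0 < lam) =>
            (distFn_le_weakNorm_rpow_mul hs0 hlam).trans_eq
              (by rw [hW0, ENNReal.zero_rpow_of_pos hs0, zero_mul])
      _ ≤ _ := by rw [lintegral_zero]; exact zero_le
  by_cases hWtop : weakNorm E g s = ∞
  · have hpow : volume E ^ (1 - s⁻¹) ≠ 0 := by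
      simp [ENNReal.rpow_eq_zero_iff, hE0, hE]
    rw [hWtop, ENNReal.mul_top (by simp [hs0, hs]), ENNReal.top_mul hpow]
    exact le_top
  obtain ⟨v, hv, hVv⟩ : ∃ v : ℝ, 0 < v ∧ volume E = ENNReal.ofReal v :=
    ⟨_, ENNReal.toReal_pos hE0 hE, (ENNReal.ofReal_toReal hE).symm⟩
  obtain ⟨w, hw, hWw⟩ : ∃ w : ℝ, 0 < w ∧ weakNorm E g s = ENNReal.ofReal w :=
    ⟨_, ENNReal.toReal_pos hW0 hWtop, (ENNReal.ofReal_toReal hWtop).symm⟩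
  -- `w v^{-1/s}` is the level at which the bounds `d ≤ v` and `d(λ) ≤ w^s λ^{-s}` meet.
  calc ∫⁻ lam in Ioi 0, distFn E g lam
      ≤ volume E * ENNReal.ofReal (w * v ^ (-s⁻¹)) +
          weakNorm E g s ^ s * ENNReal.ofReal ((w * v ^ (-s⁻¹)) ^ (1 - s) / (s - 1)) :=
        lintegral_distFn_le hs (by positivity)
    _ = ENNReal.ofReal (s / (s - 1) * w * v ^ (1 - s⁻¹)) := by
        rw [← Real.mul_add_rpow_mul_div_eq hs hv hw, hVv, hWw, ENNReal.ofReal_rpow_of_pos hw,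
          ← ENNReal.ofReal_mul hv.le, ← ENNReal.ofReal_mul (by positivity),
          ← ENNReal.ofReal_add (by positivity) (by positivity)]
    _ = ENNReal.ofReal (s / (s - 1)) * weakNorm E g s * volume E ^ (1 - s⁻¹) := by
        rw [hVv, hWw, ENNReal.ofReal_rpow_of_pos hv, ← ENNReal.ofReal_mul (by positivity),
          ← ENNReal.ofReal_mul (by positivity)]

end SetIntegral

lemma ofReal_rpow_mul_volume_ball_rpow_neg {κ s ρ : ℝ} (hρ : 0 < ρ)
    (y : EuclideanSpace ℝ (Fin n)) :
    ENNReal.ofReal (ρ ^ (κ / s)) * volume (ball y ρ) ^ (-s⁻¹) =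
      volume (ball (0 : EuclideanSpace ℝ (Fin n)) 1) ^ (-s⁻¹) *
        ENNReal.ofReal (ρ ^ ((κ - n) / s)) := by
  rw [Measure.addHaar_ball_of_pos _ _ hρ, finrank_euclideanSpace_fin,
    ENNReal.mul_rpow_of_ne_top ENNReal.ofReal_ne_top measure_ball_lt_top.ne,
    ENNReal.ofReal_rpow_of_pos (by positivity), ← mul_assoc, ← ENNReal.ofReal_mul (by positivity),
    mul_comm, ← Real.rpow_natCast, ← Real.rpow_mul hρ.le, ← Real.rpow_add hρ]
  congr 3
  ring

lemma le_lorentzMorrey {Ω : Set (EuclideanSpace ℝ (Fin n))}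
    {g : EuclideanSpace ℝ (Fin n) → ℝ≥0∞} {s κ ρ : ℝ} {t : ℝ≥0∞} {y : EuclideanSpace ℝ (Fin n)}
    (hy : y ∈ Ω) (hρ : ρ ∈ Ioo 0 (diam Ω)) :
    ENNReal.ofReal (ρ ^ ((κ - n) / s)) * lorentzNormT (Ω ∩ ball y ρ) g s t ≤
      lorentzMorrey n Ω g s t κ :=
  le_iSup₂_of_le y hy (le_iSup₂_of_le (f := fun ϱ (_ : ϱ ∈ Ioo 0 (diam Ω)) =>
    ENNReal.ofReal (ϱ ^ ((κ - n) / s)) * lorentzNormT (Ω ∩ ball y ϱ) g s t) ρ hρ le_rfl)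

lemma ofReal_rpow_mul_average_le_lorentzMorrey {s κ ρ : ℝ} (hs : 1 < s) {t : ℝ≥0∞} (ht : 0 < t)
    {Ω : Set (EuclideanSpace ℝ (Fin n))} (hΩ : MeasurableSet Ω)
    {f : EuclideanSpace ℝ (Fin n) → ℝ} (hf : Measurable f) (hf0 : ∀ x, 0 ≤ f x)
    (hfΩ : ∀ x ∉ Ω, f x = 0) {y : EuclideanSpace ℝ (Fin n)} (hy : y ∈ Ω)
    (hρ : ρ ∈ Ioo 0 (diam Ω)) :
    ENNReal.ofReal (ρ ^ (κ / s)) *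
        ((volume (ball y ρ))⁻¹ * ∫⁻ z in ball y ρ, ENNReal.ofReal (f z)) ≤
      ENNReal.ofReal (s / (s - 1)) * ENNReal.ofReal (Real.exp s⁻¹) *
        volume (ball (0 : EuclideanSpace ℝ (Fin n)) 1) ^ (-s⁻¹) *
          lorentzMorrey n Ω (fun z => ENNReal.ofReal (f z)) s t κ := by
  set g : EuclideanSpace ℝ (Fin n) → ℝ≥0∞ := fun z => ENNReal.ofReal (f z)
  set B := ball y ρ
  set L := lorentzNormT (Ω ∩ B) g s t
  have hB0 : volume B ≠ 0 := (measure_ball_pos _ _ hρ.1).ne'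
  have hB : volume B ≠ ∞ := measure_ball_lt_top.ne
  have hEB : volume (Ω ∩ B) ≤ volume B := measure_mono inter_subset_right
  have hint : ∫⁻ z in Ω ∩ B, g z ≤
      ENNReal.ofReal (s / (s - 1)) * (ENNReal.ofReal (Real.exp s⁻¹) * L) *
        volume B ^ (1 - s⁻¹) := by
    refine (setLIntegral_ofReal_le_weakNorm_mul hs (ne_top_of_le_ne_top hB hEB) hf hf0).trans ?_
    gcongr
    · exact weakNorm_le_lorentzNormT (by linarith) ht
    · exact sub_nonneg.2 (inv_le_one_of_one_le₀ hs.le)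
  calc ENNReal.ofReal (ρ ^ (κ / s)) * ((volume B)⁻¹ * ∫⁻ z in B, g z)
      = ENNReal.ofReal (ρ ^ (κ / s)) * ((volume B)⁻¹ * ∫⁻ z in Ω ∩ B, g z) := by
        rw [setLIntegral_eq_setLIntegral_inter_of_eq_zero hΩ fun x hx => by simp [g, hfΩ x hx]]
    _ ≤ ENNReal.ofReal (ρ ^ (κ / s)) * ((volume B)⁻¹ *
          (ENNReal.ofReal (s / (s - 1)) * (ENNReal.ofReal (Real.exp s⁻¹) * L) *
            volume B ^ (1 - s⁻¹))) := by
        gcongr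
    _ = ENNReal.ofReal (s / (s - 1)) * ENNReal.ofReal (Real.exp s⁻¹) *
          (ENNReal.ofReal (ρ ^ (κ / s)) * ((volume B)⁻¹ * volume B ^ (1 - s⁻¹))) * L := by
        ring
    _ = ENNReal.ofReal (s / (s - 1)) * ENNReal.ofReal (Real.exp s⁻¹) *
          volume (ball (0 : EuclideanSpace ℝ (Fin n)) 1) ^ (-s⁻¹) *
            (ENNReal.ofReal (ρ ^ ((κ - n) / s)) * L) := by
        rw [ENNReal.inv_mul_rpow_one_sub hB0 hB, ofReal_rpow_mul_volume_ball_rpow_neg hρ.1]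
        ring
    _ ≤ _ := by
        gcongr
        exact le_lorentzMorrey hy hρ

end LorentzMorrey

open LorentzMorrey in
theorem statement3_general (n : ℕ) (s κ : ℝ) (hs : 1 < s) :
    ∃ C > (0 : ℝ), ∀ (Ω : Set (EuclideanSpace ℝ (Fin n))) (t : ℝ≥0∞)
      (f : EuclideanSpace ℝ (Fin n) → ℝ),
      IsOpen Ω → Bornology.IsBounded Ω → 0 < t →
      Measurable f → (∀ x, 0 ≤ f x) → (∀ x, x ∉ Ω → f x = 0) →
      lorentzMorrey n Ω (fun z => ENNReal.ofReal (f z)) s t κ ≠ ∞ →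
      (⨆ y ∈ Ω, fracMaxCut (κ / s) (Metric.diam Ω) (fun z => ENNReal.ofReal (f z)) y) ≤
        ENNReal.ofReal C * lorentzMorrey n Ω (fun z => ENNReal.ofReal (f z)) s t κ := by
  set B₁ := volume (ball (0 : EuclideanSpace ℝ (Fin n)) 1)
  have hB₁ : 0 < B₁.toReal :=
    ENNReal.toReal_pos (measure_ball_pos _ _ one_pos).ne' measure_ball_lt_top.ne
  have hs1 : 0 < s - 1 := by linarith
  refine ⟨s / (s - 1) * Real.exp s⁻¹ * B₁.toReal ^ (-s⁻¹), by positivity,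
    fun Ω t f hΩ _ ht hf hf0 hfΩ _ => iSup₂_le fun y hy => iSup₂_le fun ρ hρ => ?_⟩
  rw [ENNReal.ofReal_mul (by positivity), ENNReal.ofReal_mul (by positivity),
    ← ENNReal.ofReal_rpow_of_pos hB₁, ENNReal.ofReal_toReal measure_ball_lt_top.ne]
  exact ofReal_rpow_mul_average_le_lorentzMorrey hs ht hΩ.measurableSet hf hf0 hfΩ hy hρ

theorem statement3 (n : ℕ) (hn : 2 ≤ n) (s κ : ℝ) (hs : 1 < s)
    (hκ0 : 0 < κ) (hκn : κ ≤ (n : ℝ)) :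
    ∃ C > (0 : ℝ), ∀ (Ω : Set (EuclideanSpace ℝ (Fin n))) (t : ℝ≥0∞)
      (f : EuclideanSpace ℝ (Fin n) → ℝ),
      IsOpen Ω → Bornology.IsBounded Ω → 0 < t →
      Measurable f → (∀ x, 0 ≤ f x) → (∀ x, x ∉ Ω → f x = 0) →
      lorentzMorrey n Ω (fun z => ENNReal.ofReal (f z)) s t κ ≠ ∞ →
      (⨆ y ∈ Ω, fracMaxCut (κ / s) (Metric.diam Ω) (fun z => ENNReal.ofReal (f z)) y) ≤
        ENNReal.ofReal C * lorentzMorrey n Ω (fun z => ENNReal.ofReal (f z)) s t κ :=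
  statement3_general n s κ hs
end
end

section
/- Let n ≥ 2, q > 0, let Ω ⊆ ℝⁿ be measurable, and let g : ℝⁿ → [0, ∞) be locally integrable. Set U = (M g)^{1/q} and, for x ∈ ℝⁿ and r > 0, set U_{2r}^x = (M^{2r}(χ_{B_{2r}(x)} g))^{1/q}. For every a > 0 there exists ε₀ = ε₀(a, n, q) ∈ (0,1) such that for all ε ∈ (0, ε₀), all λ > 0, all x ∈ ℝⁿ and all r > 0: if there exists ξ₁ ∈ Ω ∩ B_r(x) with U(ξ₁) ≤ λ, then d_U(B_r(x); ε^{−a} λ) ≤ d_{U_{2r}^x}(B_r(x); ε^{−a} λ). -/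
/-!
For `ξ ∈ B_r(x)`, the balls `B_ρ(ξ)` with `ρ < r` lie in `B_{2r}(x)`, so they only see
`χ_{B_{2r}(x)} g` and are controlled by `M^{2r}(χ_{B_{2r}(x)} g)(ξ)`; the balls with `ρ ≥ r`
lie in `B_{3ρ}(ξ₁)`, so their averages are at most `3ⁿ M g(ξ₁) ≤ 3ⁿ λ^q`. Once
`ε^{-a} ≥ 3^{n/q}`, i.e. for `ε < ε₀ = 3^{-n/(qa)}`, the second family cannot push `U(ξ)`
above `ε^{-a} λ`.
-/

open MeasureTheory Metric Set ENNReal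

noncomputable section

/-- Fractional maximal function `M_α g`. -/
def fracMax {n : ℕ} (α : ℝ) (g : EuclideanSpace ℝ (Fin n) → ℝ≥0∞)
    (x : EuclideanSpace ℝ (Fin n)) : ℝ≥0∞ :=
  ⨆ ρ ∈ Set.Ioi (0 : ℝ),
    ENNReal.ofReal (ρ ^ α) * ((volume (ball x ρ))⁻¹ * ∫⁻ y in ball x ρ, g y)

lemma Real.rpow_one_div_le_rpow_neg {b q a ε : ℝ} (hb : 0 < b) (ha : 0 < a) (hε : 0 < ε)
    (hεb : ε ≤ b ^ (-(1 / (q * a)))) : b ^ (1 / q) ≤ ε ^ (-a) :=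
  calc b ^ (1 / q) = (b ^ (-(1 / (q * a)))) ^ (-a) := by
        rw [← Real.rpow_mul hb.le]
        congr 1
        field_simp
    _ ≤ ε ^ (-a) := Real.rpow_le_rpow_of_nonpos hε hεb (by linarith)

lemma ENNReal.lt_rpow_of_lt_rpow_of_le_max {u v w K L T : ℝ≥0∞} {p : ℝ} (hp : 0 ≤ p)
    (huv : u ≤ max v (K * w)) (hw : w ^ p ≤ L) (hKL : K ^ p * L ≤ T) (hTu : T < u ^ p) :
    T < v ^ p := by
  have hmax : u ^ p ≤ max (v ^ p) (K ^ p * w ^ p) := by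
    rw [← ENNReal.mul_rpow_of_nonneg _ _ hp]
    exact (ENNReal.rpow_le_rpow huv hp).trans_eq (ENNReal.monotone_rpow_of_nonneg hp).map_max
  have hKw : K ^ p * w ^ p ≤ T := (mul_le_mul_right hw _).trans hKL
  by_contra! hvT
  exact (hTu.trans_le hmax).not_ge (max_le hvT hKw)

section BallAverages

variable {E : Type*} [NormedAddCommGroup E] [NormedSpace ℝ E] [FiniteDimensional ℝ E]
  [MeasurableSpace E] [BorelSpace E] (μ : Measure E) [μ.IsAddHaarMeasure]

lemma setAverage_ball_le_of_subset (G : E → ℝ≥0∞) {ξ ξ' : E} {ρ k : ℝ} (hk : 0 < k)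
    (hsub : ball ξ ρ ⊆ ball ξ' (k * ρ)) :
    (μ (ball ξ ρ))⁻¹ * ∫⁻ y in ball ξ ρ, G y ∂μ ≤
      ENNReal.ofReal (k ^ Module.finrank ℝ E) *
        ((μ (ball ξ' (k * ρ)))⁻¹ * ∫⁻ y in ball ξ' (k * ρ), G y ∂μ) := by
  have hK₀ : ENNReal.ofReal (k ^ Module.finrank ℝ E) ≠ 0 := by positivity
  have hinv : ENNReal.ofReal (k ^ Module.finrank ℝ E) * (μ (ball ξ' (k * ρ)))⁻¹ =
      (μ (ball ξ ρ))⁻¹ := by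
    rw [Measure.addHaar_ball_mul_of_pos μ ξ' hk, ← Measure.addHaar_ball_center μ ξ,
      ENNReal.mul_inv (Or.inl hK₀) (Or.inl ENNReal.ofReal_ne_top), ← mul_assoc,
      ENNReal.mul_inv_cancel hK₀ ENNReal.ofReal_ne_top, one_mul]
  rw [← mul_assoc, hinv]
  exact mul_le_mul_right (lintegral_mono_set hsub) _

end BallAverages

section MaximalFunctions

variable {n : ℕ}

lemma setAverage_ball_le_fracMax_zero (G : EuclideanSpace ℝ (Fin n) → ℝ≥0∞)
    (ξ : EuclideanSpace ℝ (Fin n)) {ρ : ℝ} (hρ : 0 < ρ) :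
    (volume (ball ξ ρ))⁻¹ * ∫⁻ y in ball ξ ρ, G y ≤ fracMax 0 G ξ := by
  simpa only [fracMax, Real.rpow_zero, ENNReal.ofReal_one, one_mul] using
    le_iSup₂ (f := fun ρ (_ : ρ ∈ Ioi (0 : ℝ)) =>
      ENNReal.ofReal (ρ ^ (0 : ℝ)) * ((volume (ball ξ ρ))⁻¹ * ∫⁻ y in ball ξ ρ, G y))
      ρ hρ

lemma setAverage_ball_le_fracMaxCut_zero (G : EuclideanSpace ℝ (Fin n) → ℝ≥0∞)
    (ξ : EuclideanSpace ℝ (Fin n)) {ρ R : ℝ} (hρ : 0 < ρ) (hρR : ρ < R) :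
    (volume (ball ξ ρ))⁻¹ * ∫⁻ y in ball ξ ρ, G y ≤ fracMaxCut 0 R G ξ := by
  simpa only [fracMaxCut, Real.rpow_zero, ENNReal.ofReal_one, one_mul] using
    le_iSup₂ (f := fun ρ (_ : ρ ∈ Ioo (0 : ℝ) R) =>
      ENNReal.ofReal (ρ ^ (0 : ℝ)) * ((volume (ball ξ ρ))⁻¹ * ∫⁻ y in ball ξ ρ, G y))
      ρ ⟨hρ, hρR⟩

lemma fracMax_zero_le_max_fracMaxCut {G Gc : EuclideanSpace ℝ (Fin n) → ℝ≥0∞}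
    {x ξ ξ₁ : EuclideanSpace ℝ (Fin n)} {r : ℝ} (hG : EqOn G Gc (ball x (2 * r)))
    (hξ : ξ ∈ ball x r) (hξ₁ : ξ₁ ∈ ball x r) :
    fracMax 0 G ξ ≤
      max (fracMaxCut 0 (2 * r) Gc ξ) (ENNReal.ofReal (3 ^ n) * fracMax 0 G ξ₁) := by
  rw [mem_ball] at hξ hξ₁
  refine iSup₂_le fun ρ (hρ : 0 < ρ) => ?_
  rw [Real.rpow_zero, ENNReal.ofReal_one, one_mul]
  rcases lt_or_ge ρ r with hρr | hrρ
  · have hsub : ball ξ ρ ⊆ ball x (2 * r) := ball_subset_ball' (by linarith)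
    rw [setLIntegral_congr_fun measurableSet_ball (hG.mono hsub)]
    exact le_max_of_le_left (setAverage_ball_le_fracMaxCut_zero Gc ξ hρ (by linarith))
  · have hsub : ball ξ ρ ⊆ ball ξ₁ (3 * ρ) :=
      ball_subset_ball' (by linarith [dist_triangle_right ξ ξ₁ x])
    refine le_max_of_le_right ?_
    calc (volume (ball ξ ρ))⁻¹ * ∫⁻ y in ball ξ ρ, G y
        ≤ ENNReal.ofReal (3 ^ n) *
            ((volume (ball ξ₁ (3 * ρ)))⁻¹ * ∫⁻ y in ball ξ₁ (3 * ρ), G y) := by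
          simpa only [finrank_euclideanSpace_fin] using
            setAverage_ball_le_of_subset volume G three_pos hsub
      _ ≤ ENNReal.ofReal (3 ^ n) * fracMax 0 G ξ₁ :=
          mul_le_mul_right (setAverage_ball_le_fracMax_zero G ξ₁ (by positivity)) _

end MaximalFunctions

theorem statement5 (n : ℕ) (hn : 2 ≤ n) (q a : ℝ) (hq : 0 < q) (ha : 0 < a) :
    ∃ ε₀ : ℝ, 0 < ε₀ ∧ ε₀ < 1 ∧
      ∀ (Ω : Set (EuclideanSpace ℝ (Fin n))) (g : EuclideanSpace ℝ (Fin n) → ℝ)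
        (x : EuclideanSpace ℝ (Fin n)) (r ε lam : ℝ),
        MeasurableSet Ω → LocallyIntegrable g volume → (∀ z, 0 ≤ g z) →
        0 < r → 0 < ε → ε < ε₀ → 0 < lam →
        (∃ ξ₁ ∈ Ω ∩ ball x r,
          (fracMax 0 (fun z => ENNReal.ofReal (g z)) ξ₁) ^ (1 / q) ≤ ENNReal.ofReal lam) →
        distFn (ball x r ∩ Ω)
            (fun ξ => (fracMax 0 (fun z => ENNReal.ofReal (g z)) ξ) ^ (1 / q))
            (ε ^ (-a) * lam) ≤
          distFn (ball x r ∩ Ω)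
            (fun ξ => (fracMaxCut 0 (2 * r)
              (fun z => ENNReal.ofReal (((ball x (2 * r)).indicator g) z)) ξ) ^ (1 / q))
            (ε ^ (-a) * lam) := by
  have h3n : (1 : ℝ) < 3 ^ n := one_lt_pow₀ (by norm_num) (by omega)
  refine ⟨(3 ^ n) ^ (-(1 / (q * a))), by positivity,
    Real.rpow_lt_one_of_one_lt_of_neg h3n (by simp only [neg_lt_zero]; positivity), ?_⟩
  rintro Ω g x r ε lam - - - - hε hεε₀ hlam ⟨ξ₁, ⟨-, hξ₁⟩, hUξ₁⟩
  have hε_pow : (3 ^ n : ℝ) ^ (1 / q) ≤ ε ^ (-a) :=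
    Real.rpow_one_div_le_rpow_neg (by positivity) ha hε hεε₀.le
  have hlevel : ENNReal.ofReal (3 ^ n) ^ (1 / q) * ENNReal.ofReal lam ≤
      ENNReal.ofReal (ε ^ (-a) * lam) := by
    rw [ENNReal.ofReal_rpow_of_nonneg (by positivity) (by positivity),
      ← ENNReal.ofReal_mul (by positivity)]
    exact ENNReal.ofReal_le_ofReal (mul_le_mul_of_nonneg_right hε_pow hlam.le)
  have hlocal : EqOn (fun z => ENNReal.ofReal (g z))
      (fun z => ENNReal.ofReal ((ball x (2 * r)).indicator g z)) (ball x (2 * r)) :=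
    fun z hz => by simp only [indicator_of_mem hz]
  refine measure_mono fun ξ ⟨hξ, hUξ⟩ => ⟨hξ, ?_⟩
  exact ENNReal.lt_rpow_of_lt_rpow_of_le_max (by positivity)
    (fracMax_zero_le_max_fracMaxCut hlocal hξ.1 hξ₁) hUξ₁ hlevel hUξ
end
end

section
/- Let Ω ⊆ ℝⁿ be measurable and let U, Π : Ω → [0, ∞] be measurable functions. Suppose there exist constants a > 0, b ∈ ℝ, C₁ > 0 and ε₀ ∈ (0,1) such that the level-set inequality d_U(ε^{−a} λ) ≤ C₁ ε d_U(λ) + d_Π(ε^{b} λ) holds for all λ > 0 and all ε ∈ (0, ε₀). Then for every s with 0 < s < 1/a and every t with 0 < t < ∞, if ‖U‖_{L^{s,t}(Ω)} < ∞, then ‖U‖_{L^{s,t}(Ω)} ≤ C ‖Π‖_{L^{s,t}(Ω)} for a constant C depending only on a, b, C₁, ε₀, s and t. -/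
/-!
Raise the good-λ inequality to the power `r = t/s`, multiply by `λ^(t-1)` and integrate over
`λ > 0`. The dilations `λ ↦ ε^(-a) λ` and `λ ↦ ε^b λ` only rescale the integral
`I(g) = ∫₀^∞ λ^(t-1) d_g(λ)^r dλ`, by `ε^(at)` and `ε^(-bt)`, so with
`(x + y)^r ≤ 2^r (x^r + y^r)`,
  `ε^(at) I(U) ≤ 2^r (C₁ ε)^r I(U) + 2^r ε^(-bt) I(V)`.
Since `s < 1/a` the exponent `r - at` is positive, so for `ε` small enough the `U`-term on the right
is at most `ε^(at) I(U) / 2`, and it can be absorbed into the left side because `I(U) < ∞`.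
-/

open MeasureTheory Metric Set ENNReal

noncomputable section

open Filter Topology

theorem ENNReal.le_two_mul_of_le_half_add {x y : ℝ≥0∞} (hx : x ≠ ∞) (h : x ≤ x / 2 + y) :
    x ≤ 2 * y := by
  have hhalf : x / 2 ≤ y := by
    rw [← ENNReal.add_le_add_iff_left (ENNReal.div_ne_top hx two_ne_zero), ENNReal.add_halves]
    exact h
  rwa [ENNReal.div_le_iff two_ne_zero ofNat_ne_top, mul_comm] at hhalf

theorem setLIntegral_Ioi_comp_mul_left {f : ℝ → ℝ≥0∞} (hf : Measurable f) {c : ℝ}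
    (hc : 0 < c) :
    ∫⁻ x in Ioi 0, f (c * x) = ENNReal.ofReal c⁻¹ * ∫⁻ x in Ioi 0, f x := by
  have hpre : (c * ·) ⁻¹' Ioi (0 : ℝ) = Ioi 0 := by
    rw [preimage_const_mul_Ioi₀ _ hc, zero_div]
  rw [← hpre, ← setLIntegral_map measurableSet_Ioi hf (measurable_const_mul c),
    Real.map_volume_mul_left hc.ne', Measure.restrict_smul, lintegral_smul_measure,
    abs_of_pos (inv_pos.2 hc), smul_eq_mul, hpre]

theorem eventually_rpow_mul_le_half {a t r C : ℝ} (hC : 0 ≤ C) (hat : a * t < r) :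
    ∀ᶠ ε in 𝓝[>] 0, (ε ^ (-a)) ^ t * (2 ^ r * (C * ε) ^ r) ≤ 1 / 2 := by
  have hlim : Tendsto (fun ε : ℝ => 2 ^ r * C ^ r * ε ^ (r - a * t)) (𝓝[>] 0) (𝓝 0) := by
    have := ((Real.continuousAt_rpow_const 0 _ (Or.inr (sub_pos.2 hat).le)).const_mul
      (2 ^ r * C ^ r)).tendsto.mono_left (nhdsWithin_le_nhds (s := Ioi 0))
    rwa [Real.zero_rpow (sub_pos.2 hat).ne', mul_zero] at this
  filter_upwards [hlim.eventually (ge_mem_nhds one_half_pos), self_mem_nhdsWithin]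
    with ε hsmall (hε : 0 < ε)
  refine (le_of_eq ?_).trans hsmall
  rw [← Real.rpow_mul hε.le, Real.mul_rpow hC hε.le, sub_eq_add_neg, Real.rpow_add hε]
  ring_nf

theorem distFn_antitone {n : ℕ} (Ω : Set (EuclideanSpace ℝ (Fin n)))
    (g : EuclideanSpace ℝ (Fin n) → ℝ≥0∞) : Antitone (distFn Ω g) :=
  fun _ _ h => measure_mono fun _ hx => ⟨hx.1, (ENNReal.ofReal_le_ofReal h).trans_lt hx.2⟩

def lorentzIntegral (t r : ℝ) (φ : ℝ → ℝ≥0∞) : ℝ≥0∞ :=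
  ∫⁻ lam in Ioi 0, ENNReal.ofReal (lam ^ (t - 1)) * φ lam ^ r

theorem lorentzNorm_eq_lorentzIntegral {n : ℕ} (Ω : Set (EuclideanSpace ℝ (Fin n)))
    (g : EuclideanSpace ℝ (Fin n) → ℝ≥0∞) (s t : ℝ) :
    lorentzNorm Ω g s t =
      (ENNReal.ofReal s * lorentzIntegral t (t / s) (distFn Ω g)) ^ (1 / t) :=
  rfl

theorem lorentzIntegral_comp_mul_left {φ : ℝ → ℝ≥0∞} (hφ : Measurable φ) (t r : ℝ) {c : ℝ}
    (hc : 0 < c) :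
    lorentzIntegral t r (fun lam => φ (c * lam)) =
      ENNReal.ofReal (c ^ (-t)) * lorentzIntegral t r φ := by
  have hweight : ∀ lam ∈ Ioi (0 : ℝ), ENNReal.ofReal (lam ^ (t - 1)) * φ (c * lam) ^ r =
        ENNReal.ofReal (c ^ (1 - t)) *
          (ENNReal.ofReal ((c * lam) ^ (t - 1)) * φ (c * lam) ^ r) := by
    intro lam hlam
    rw [← mul_assoc, ← ENNReal.ofReal_mul (by positivity), Real.mul_rpow hc.le (le_of_lt hlam),
      ← mul_assoc, ← Real.rpow_add hc, sub_add_sub_cancel', sub_self, Real.rpow_zero, one_mul]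
  have hmeas : Measurable fun lam : ℝ => ENNReal.ofReal (lam ^ (t - 1)) * φ lam ^ r := by fun_prop
  rw [lorentzIntegral, setLIntegral_congr_fun measurableSet_Ioi hweight,
    lintegral_const_mul' _ _ ofReal_ne_top, setLIntegral_Ioi_comp_mul_left hmeas hc,
    ← mul_assoc, ← ENNReal.ofReal_mul (by positivity), ← Real.rpow_neg_one, ← Real.rpow_add hc,
    show 1 - t + -1 = -t by ring]
  rfl

theorem lorentzIntegral_le_of_good_lambda {t r κ μ A : ℝ} {φ ψ : ℝ → ℝ≥0∞}
    (hφ : Measurable φ) (hψ : Measurable ψ) (hr : 0 ≤ r) (hκ : 0 < κ) (hμ : 0 < μ) (hA : 0 ≤ A)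
    (h : ∀ lam > 0, φ (κ * lam) ≤ ENNReal.ofReal A * φ lam + ψ (μ * lam)) :
    ENNReal.ofReal (κ ^ (-t)) * lorentzIntegral t r φ ≤
      ENNReal.ofReal (2 ^ r * A ^ r) * lorentzIntegral t r φ +
        ENNReal.ofReal (2 ^ r * μ ^ (-t)) * lorentzIntegral t r ψ := by
  have hpoint : ∀ lam > 0, φ (κ * lam) ^ r ≤
      ENNReal.ofReal (2 ^ r * A ^ r) * φ lam ^ r + ENNReal.ofReal (2 ^ r) * ψ (μ * lam) ^ r := by
    intro lam hlam
    calc φ (κ * lam) ^ r ≤ (ENNReal.ofReal A * φ lam + ψ (μ * lam)) ^ r :=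
          ENNReal.rpow_le_rpow (h lam hlam) hr
      _ ≤ 2 ^ r * ((ENNReal.ofReal A * φ lam) ^ r + ψ (μ * lam) ^ r) :=
          ENNReal.add_rpow_le_two_rpow_mul_rpow_add_rpow _ _ hr
      _ = _ := by
          rw [ENNReal.mul_rpow_of_nonneg _ _ hr, ENNReal.ofReal_rpow_of_nonneg hA hr,
            ENNReal.ofReal_mul (by positivity), ← ENNReal.ofReal_rpow_of_nonneg zero_le_two hr,
            ofReal_ofNat]
          ring
  calc ENNReal.ofReal (κ ^ (-t)) * lorentzIntegral t r φ
      = lorentzIntegral t r (fun lam => φ (κ * lam)) :=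
        (lorentzIntegral_comp_mul_left hφ t r hκ).symm
    _ ≤ ∫⁻ lam in Ioi 0,
          ENNReal.ofReal (2 ^ r * A ^ r) * (ENNReal.ofReal (lam ^ (t - 1)) * φ lam ^ r) +
            ENNReal.ofReal (2 ^ r) * (ENNReal.ofReal (lam ^ (t - 1)) * ψ (μ * lam) ^ r) := by
        refine setLIntegral_mono' measurableSet_Ioi fun lam hlam => ?_
        refine (mul_le_mul_right (hpoint lam hlam) _).trans_eq ?_
        ring
    _ = ENNReal.ofReal (2 ^ r * A ^ r) * lorentzIntegral t r φ +
          ENNReal.ofReal (2 ^ r) * lorentzIntegral t r (fun lam => ψ (μ * lam)) := by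
        rw [lintegral_add_left (by fun_prop), lintegral_const_mul' _ _ ofReal_ne_top,
          lintegral_const_mul' _ _ ofReal_ne_top]
        rfl
    _ = _ := by
        rw [lorentzIntegral_comp_mul_left hψ t r hμ, ← mul_assoc,
          ← ENNReal.ofReal_mul (by positivity)]

theorem lorentzIntegral_le_of_good_lambda_of_le_half {t r κ μ A : ℝ} {φ ψ : ℝ → ℝ≥0∞}
    (hφ : Measurable φ) (hψ : Measurable ψ) (hr : 0 ≤ r) (hκ : 0 < κ) (hμ : 0 < μ) (hA : 0 ≤ A)
    (hsmall : κ ^ t * (2 ^ r * A ^ r) ≤ 1 / 2) (hfin : lorentzIntegral t r φ ≠ ∞)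
    (h : ∀ lam > 0, φ (κ * lam) ≤ ENNReal.ofReal A * φ lam + ψ (μ * lam)) :
    lorentzIntegral t r φ ≤
      ENNReal.ofReal (2 * (κ ^ t * (2 ^ r * μ ^ (-t)))) * lorentzIntegral t r ψ := by
  have hhalf : ENNReal.ofReal (κ ^ t * (2 ^ r * A ^ r)) ≤ 2⁻¹ := by
    refine (ENNReal.ofReal_le_ofReal hsmall).trans_eq ?_
    rw [one_div, ENNReal.ofReal_inv_of_pos two_pos, ofReal_ofNat]
  have habsorb : lorentzIntegral t r φ ≤ lorentzIntegral t r φ / 2 +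
      ENNReal.ofReal (κ ^ t * (2 ^ r * μ ^ (-t))) * lorentzIntegral t r ψ := calc
    lorentzIntegral t r φ
        = ENNReal.ofReal (κ ^ t) * (ENNReal.ofReal (κ ^ (-t)) * lorentzIntegral t r φ) := by
      rw [← mul_assoc, ← ENNReal.ofReal_mul (by positivity), ← Real.rpow_add hκ, add_neg_cancel,
        Real.rpow_zero, ofReal_one, one_mul]
    _ ≤ ENNReal.ofReal (κ ^ t) * (ENNReal.ofReal (2 ^ r * A ^ r) * lorentzIntegral t r φ +
          ENNReal.ofReal (2 ^ r * μ ^ (-t)) * lorentzIntegral t r ψ) := by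
      gcongr
      exact lorentzIntegral_le_of_good_lambda hφ hψ hr hκ hμ hA h
    _ = ENNReal.ofReal (κ ^ t * (2 ^ r * A ^ r)) * lorentzIntegral t r φ +
          ENNReal.ofReal (κ ^ t * (2 ^ r * μ ^ (-t))) * lorentzIntegral t r ψ := by
      rw [mul_add, ← mul_assoc, ← mul_assoc, ← ENNReal.ofReal_mul (by positivity),
        ← ENNReal.ofReal_mul (by positivity)]
    _ ≤ lorentzIntegral t r φ / 2 +
          ENNReal.ofReal (κ ^ t * (2 ^ r * μ ^ (-t))) * lorentzIntegral t r ψ := by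
      rw [ENNReal.div_eq_inv_mul]
      gcongr
  rw [ENNReal.ofReal_mul zero_le_two, ofReal_ofNat, mul_assoc]
  exact ENNReal.le_two_mul_of_le_half_add hfin habsorb

theorem lorentzIntegral_ne_top_of_lorentzNorm_ne_top {n : ℕ}
    {Ω : Set (EuclideanSpace ℝ (Fin n))} {g : EuclideanSpace ℝ (Fin n) → ℝ≥0∞} {s t : ℝ}
    (hs : 0 < s) (ht : 0 < t) (hg : lorentzNorm Ω g s t ≠ ∞) :
    lorentzIntegral t (t / s) (distFn Ω g) ≠ ∞ := by
  contrapose! hg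
  rw [lorentzNorm_eq_lorentzIntegral, hg, ENNReal.mul_top (by simpa using hs),
    ENNReal.top_rpow_of_pos (by positivity)]

theorem lorentzNorm_le_of_lorentzIntegral_le {n : ℕ} {Ω : Set (EuclideanSpace ℝ (Fin n))}
    {U V : EuclideanSpace ℝ (Fin n) → ℝ≥0∞} {s t M : ℝ} (ht : 0 < t) (hM : 0 ≤ M)
    (h : lorentzIntegral t (t / s) (distFn Ω U) ≤
      ENNReal.ofReal M * lorentzIntegral t (t / s) (distFn Ω V)) :
    lorentzNorm Ω U s t ≤ ENNReal.ofReal (M ^ (1 / t)) * lorentzNorm Ω V s t := by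
  rw [lorentzNorm_eq_lorentzIntegral, lorentzNorm_eq_lorentzIntegral,
    ← ENNReal.ofReal_rpow_of_nonneg hM (by positivity),
    ← ENNReal.mul_rpow_of_nonneg _ _ (by positivity), mul_left_comm]
  gcongr

theorem statement6_general (n : ℕ) (a b C₁ ε₀ s t : ℝ) (ha : 0 < a) (hC₁ : 0 < C₁)
    (hε₀0 : 0 < ε₀) (hs0 : 0 < s) (hsa : s < 1 / a) (ht : 0 < t) :
    ∃ C > (0 : ℝ), ∀ (Ω : Set (EuclideanSpace ℝ (Fin n)))
      (U V : EuclideanSpace ℝ (Fin n) → ℝ≥0∞),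
      (∀ lam ε : ℝ, 0 < lam → 0 < ε → ε < ε₀ →
        distFn Ω U (ε ^ (-a) * lam) ≤
          ENNReal.ofReal (C₁ * ε) * distFn Ω U lam + distFn Ω V (ε ^ b * lam)) →
      lorentzNorm Ω U s t ≠ ∞ →
      lorentzNorm Ω U s t ≤ ENNReal.ofReal C * lorentzNorm Ω V s t := by
  have hat : a * t < t / s := by
    have : s * a < 1 := (lt_div_iff₀ ha).1 hsa
    rw [lt_div_iff₀ hs0]
    nlinarith
  obtain ⟨ε, ⟨hsmall, hεε₀⟩, hε⟩ := ((eventually_rpow_mul_le_half hC₁.le hat).and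
    ((eventually_lt_nhds hε₀0).filter_mono nhdsWithin_le_nhds)).and self_mem_nhdsWithin |>.exists
  refine ⟨(2 * ((ε ^ (-a)) ^ t * (2 ^ (t / s) * (ε ^ b) ^ (-t)))) ^ (1 / t), by positivity, ?_⟩
  intro Ω U V hgood hU
  refine lorentzNorm_le_of_lorentzIntegral_le ht (by positivity) ?_
  exact lorentzIntegral_le_of_good_lambda_of_le_half (distFn_antitone Ω U).measurable
    (distFn_antitone Ω V).measurable (by positivity) (by positivity) (by positivity)
    (by positivity) hsmall (lorentzIntegral_ne_top_of_lorentzNorm_ne_top hs0 ht hU)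
    fun lam hlam => hgood lam ε hlam hε hεε₀

theorem statement6 (n : ℕ) (a b C₁ ε₀ s t : ℝ) (ha : 0 < a) (hC₁ : 0 < C₁)
    (hε₀0 : 0 < ε₀) (hε₀1 : ε₀ < 1) (hs0 : 0 < s) (hsa : s < 1 / a) (ht : 0 < t) :
    ∃ C > (0 : ℝ), ∀ (Ω : Set (EuclideanSpace ℝ (Fin n)))
      (U V : EuclideanSpace ℝ (Fin n) → ℝ≥0∞),
      (∀ lam ε : ℝ, 0 < lam → 0 < ε → ε < ε₀ →
        distFn Ω U (ε ^ (-a) * lam) ≤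
          ENNReal.ofReal (C₁ * ε) * distFn Ω U lam + distFn Ω V (ε ^ b * lam)) →
      lorentzNorm Ω U s t ≠ ∞ →
      lorentzNorm Ω U s t ≤ ENNReal.ofReal C * lorentzNorm Ω V s t :=
  statement6_general n a b C₁ ε₀ s t ha hC₁ hε₀0 hs0 hsa ht
end
end

section
/- Let Ω ⊆ ℝⁿ be measurable and let U, Π : Ω → [0, ∞] be measurable functions. Suppose there exist constants a > 0, b ∈ ℝ, C₁ > 0 and ε₀ ∈ (0,1) such that the level-set inequality d_U(ε^{−a} λ) ≤ C₁ ε d_U(λ) + d_Π(ε^{b} λ) holds for all λ > 0 and all ε ∈ (0, ε₀). Then for every s with 0 < s < 1/a, if ‖U‖_{L^{s,∞}(Ω)} < ∞, then ‖U‖_{L^{s,∞}(Ω)} ≤ C ‖Π‖_{L^{s,∞}(Ω)} for a constant C depending only on a, b, C₁, ε₀ and s. -/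
/-!
Raising the level-set inequality at `ε^{-a} λ` to the power `1/s` and multiplying by `ε^{-a} λ`
bounds every term of the supremum defining `‖U‖_{L^{s,∞}}` by
`2^{1/s} (C₁ ε)^{1/s} ε^{-a} ‖U‖ + 2^{1/s} ε^{-a-b} ‖V‖`. Since `1/s > a`, the coefficient of `‖U‖`
is of order `ε^{1/s - a}`, so for a fixed small `ε` it is at most `1/2`, and the finite
quantity `‖U‖` can be absorbed into the left-hand side.
-/

open MeasureTheory Metric Set ENNReal

noncomputable section

open Topology

namespace ENNReal

lemma le_two_mul_of_le_mul_add {x y A : ℝ≥0∞} (hx : x ≠ ∞) (hA : A ≤ 2⁻¹)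
    (h : x ≤ A * x + y) : x ≤ 2 * y := by
  have hhalf : x ≤ x / 2 + y := h.trans (by rw [ENNReal.div_eq_inv_mul]; gcongr)
  have hx2 : x / 2 ≤ y := by
    rw [← ENNReal.sub_half hx]
    exact tsub_le_iff_left.2 hhalf
  calc x = 2 * (x / 2) := (ENNReal.mul_div_cancel two_ne_zero ofNat_ne_top).symm
    _ ≤ 2 * y := by gcongr

lemma tendsto_ofReal_mul_rpow_mul_ofReal_rpow_neg {C a r : ℝ} (hr : 0 ≤ r) (har : a < r) :
    Filter.Tendsto (fun ε : ℝ ↦ ENNReal.ofReal (C * ε) ^ r * ENNReal.ofReal (ε ^ (-a)))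
      (𝓝[>] 0) (𝓝 0) := by
  have hpow : Filter.Tendsto (fun ε : ℝ ↦ ENNReal.ofReal ε ^ (r - a)) (𝓝[>] 0) (𝓝 0) := by
    have := ((ENNReal.continuous_rpow_const (y := r - a)).comp ENNReal.continuous_ofReal).tendsto 0
    simp only [Function.comp_def, ofReal_zero, zero_rpow_of_pos (sub_pos.2 har)] at this
    exact this.mono_left nhdsWithin_le_nhds
  have hconst : ENNReal.ofReal C ^ r ≠ ∞ := rpow_ne_top_of_nonneg hr ofReal_ne_top
  have hlim := ENNReal.Tendsto.const_mul hpow (Or.inr hconst)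
  rw [mul_zero] at hlim
  refine hlim.congr' ?_
  filter_upwards [self_mem_nhdsWithin] with ε (hε : 0 < ε)
  rw [ofReal_mul' hε.le, mul_rpow_of_nonneg _ _ hr, ← ofReal_rpow_of_pos hε, mul_assoc,
    ← rpow_add _ _ (ofReal_pos.2 hε).ne' ofReal_ne_top, sub_eq_add_neg]

end ENNReal

section WeakNorm

variable {n : ℕ} {Ω : Set (EuclideanSpace ℝ (Fin n))} {g U V : EuclideanSpace ℝ (Fin n) → ℝ≥0∞}
  {s : ℝ}

lemma ofReal_mul_distFn_rpow_le_weakNorm {lam : ℝ} (hlam : 0 < lam) :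
    ENNReal.ofReal lam * distFn Ω g lam ^ (1 / s) ≤ weakNorm Ω g s :=
  le_iSup₂ (f := fun lam (_ : lam ∈ Ioi (0 : ℝ)) ↦ ENNReal.ofReal lam * distFn Ω g lam ^ (1 / s))
    lam hlam

lemma ofReal_mul_distFn_mul_rpow_le {c lam : ℝ} (hc : 0 < c) (hlam : 0 < lam) :
    ENNReal.ofReal lam * distFn Ω g (c * lam) ^ (1 / s) ≤
      ENNReal.ofReal c⁻¹ * weakNorm Ω g s := by
  rw [← inv_mul_cancel_left₀ hc.ne' lam, ENNReal.ofReal_mul (inv_nonneg.2 hc.le),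
    mul_inv_cancel_left₀ hc.ne', mul_assoc]
  gcongr
  exact ofReal_mul_distFn_rpow_le_weakNorm (mul_pos hc hlam)

lemma weakNorm_le_of_forall_mul {t : ℝ} {M : ℝ≥0∞} (ht : 0 < t)
    (h : ∀ lam > 0, ENNReal.ofReal (t * lam) * distFn Ω g (t * lam) ^ (1 / s) ≤ M) :
    weakNorm Ω g s ≤ M :=
  iSup₂_le fun mu hmu ↦ by simpa [mul_div_cancel₀ _ ht.ne'] using h (mu / t) (div_pos hmu ht)

theorem weakNorm_le_of_distFn_le (hs : 0 ≤ s) {K : ℝ≥0∞} {t c : ℝ} (ht : 0 < t) (hc : 0 < c)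
    (h : ∀ lam > 0, distFn Ω U (t * lam) ≤ K * distFn Ω U lam + distFn Ω V (c * lam)) :
    weakNorm Ω U s ≤ 2 ^ (1 / s) * (K ^ (1 / s) * ENNReal.ofReal t) * weakNorm Ω U s +
      2 ^ (1 / s) * ENNReal.ofReal t * (ENNReal.ofReal c⁻¹ * weakNorm Ω V s) := by
  have hr : 0 ≤ 1 / s := by positivity
  refine weakNorm_le_of_forall_mul ht fun lam hlam ↦ ?_
  calc ENNReal.ofReal (t * lam) * distFn Ω U (t * lam) ^ (1 / s)
      ≤ ENNReal.ofReal t * ENNReal.ofReal lam *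
          (2 ^ (1 / s) * ((K * distFn Ω U lam) ^ (1 / s) + distFn Ω V (c * lam) ^ (1 / s))) := by
        rw [ENNReal.ofReal_mul ht.le]
        gcongr
        exact (rpow_le_rpow (h lam hlam) hr).trans (add_rpow_le_two_rpow_mul_rpow_add_rpow _ _ hr)
    _ = 2 ^ (1 / s) * (K ^ (1 / s) * ENNReal.ofReal t) *
          (ENNReal.ofReal lam * distFn Ω U lam ^ (1 / s)) +
        2 ^ (1 / s) * ENNReal.ofReal t * (ENNReal.ofReal lam * distFn Ω V (c * lam) ^ (1 / s)) := by
        rw [mul_rpow_of_nonneg _ _ hr]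
        ring
    _ ≤ _ := by
        gcongr _ * ?_ + _ * ?_
        · exact ofReal_mul_distFn_rpow_le_weakNorm hlam
        · exact ofReal_mul_distFn_mul_rpow_le hc hlam

end WeakNorm

theorem statement7_general (n : ℕ) (a b C₁ ε₀ s : ℝ)
    (hε₀0 : 0 < ε₀) (hs0 : 0 < s) (hsa : s < 1 / a) :
    ∃ C > (0 : ℝ), ∀ (Ω : Set (EuclideanSpace ℝ (Fin n)))
      (U V : EuclideanSpace ℝ (Fin n) → ℝ≥0∞),
      (∀ lam ε : ℝ, 0 < lam → 0 < ε → ε < ε₀ →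
        distFn Ω U (ε ^ (-a) * lam) ≤
          ENNReal.ofReal (C₁ * ε) * distFn Ω U lam + distFn Ω V (ε ^ b * lam)) →
      weakNorm Ω U s ≠ ∞ →
      weakNorm Ω U s ≤ ENNReal.ofReal C * weakNorm Ω V s := by
  have ha : 0 < a := one_div_pos.1 (hs0.trans hsa)
  have hr : 0 ≤ 1 / s := (one_div_pos.2 hs0).le
  have hsmall := ENNReal.Tendsto.const_mul
    (ENNReal.tendsto_ofReal_mul_rpow_mul_ofReal_rpow_neg (C := C₁) hr ((lt_one_div ha hs0).2 hsa))
    (Or.inr (rpow_ne_top_of_nonneg (x := 2) hr ofNat_ne_top))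
  rw [mul_zero] at hsmall
  obtain ⟨ε, hcoeff, hε0, hεε₀⟩ :=
    ((hsmall.eventually (gt_mem_nhds (by norm_num : (0 : ℝ≥0∞) < 2⁻¹))).and
      (Ioo_mem_nhdsGT hε₀0)).exists
  refine ⟨2 * 2 ^ (1 / s) * (ε ^ (-a) * (ε ^ b)⁻¹), by positivity, fun Ω U V hUV hfin ↦ ?_⟩
  have hU := weakNorm_le_of_distFn_le hs0.le (Real.rpow_pos_of_pos hε0 _)
    (Real.rpow_pos_of_pos hε0 _) fun lam hlam ↦ hUV lam ε hlam hε0 hεε₀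
  refine (ENNReal.le_two_mul_of_le_mul_add hfin hcoeff.le hU).trans_eq ?_
  rw [ENNReal.ofReal_mul (by positivity), ENNReal.ofReal_mul (by positivity),
    ENNReal.ofReal_mul (by positivity), ← ENNReal.ofReal_rpow_of_pos two_pos]
  simp [mul_assoc]

theorem statement7 (n : ℕ) (a b C₁ ε₀ s : ℝ) (ha : 0 < a) (hC₁ : 0 < C₁)
    (hε₀0 : 0 < ε₀) (hε₀1 : ε₀ < 1) (hs0 : 0 < s) (hsa : s < 1 / a) :
    ∃ C > (0 : ℝ), ∀ (Ω : Set (EuclideanSpace ℝ (Fin n)))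
      (U V : EuclideanSpace ℝ (Fin n) → ℝ≥0∞),
      (∀ lam ε : ℝ, 0 < lam → 0 < ε → ε < ε₀ →
        distFn Ω U (ε ^ (-a) * lam) ≤
          ENNReal.ofReal (C₁ * ε) * distFn Ω U lam + distFn Ω V (ε ^ b * lam)) →
      weakNorm Ω U s ≠ ∞ →
      weakNorm Ω U s ≤ ENNReal.ofReal C * weakNorm Ω V s :=
  statement7_general n a b C₁ ε₀ s hε₀0 hs0 hsa
end
end
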